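/- Let R be an integral domain, p ∈ R a prime element, and (K,w) a WSC with w: K → R. The short exact sequence 0 → R →(×p) R → R/pR → 0 induces a long exact sequence of weighted homology ⋯ → H_n(K,w;R) →(×p) H_n(K,w;R) → H_n(K,w;R/pR) →∂ H_{n-1}(K,w;R) → ⋯, and the generalized Bockstein β = ρ_* ∘ ∂: H_n(K,w;R/pR) → H_{n-1}(K,w;R/pR) satisfies β ∘ β = 0. -/

import Mathlib

/-!
Multiplication by `p` is injective on `R`-chains, and a chain reduces to zero mod `p` exactly
when it is `p` times a chain, so `0 → C(K,w;R) →(×p) C(K,w;R) → C(K,w;R/pR) → 0` is a short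
exact sequence of chain complexes. The long exact sequence is the usual diagram chase, the
connecting map `δ` sending the class of a mod-`p` cycle to the class of `∂c / p` for any lift
`c`. Then `β ∘ β = ρ ∘ (δ ∘ ρ) ∘ δ` vanishes because `δ ∘ ρ = 0` by exactness.
-/

open Finset

/-- An abstract simplicial complex on a vertex type `V`. -/
structure SComplex (V : Type*) where
  faces : Set (Finset V)
  not_empty_mem : ∅ ∉ faces
  down_closed : ∀ {s t : Finset V}, s ∈ faces → t ⊆ s → t.Nonempty → t ∈ faces

/-- The `n`-dimensional simplices (cardinality `n+1`) of a complex. -/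
def SComplex.SimplexOf {V : Type*} (K : SComplex V) (n : ℕ) : Type _ :=
  {s : Finset V // s ∈ K.faces ∧ s.card = n + 1}

/-- The `i`-th face of an `(n+1)`-dimensional simplex: delete its `i`-th vertex
(vertices listed in increasing order). -/
noncomputable def SComplex.face {V : Type*} [LinearOrder V] (K : SComplex V) {n : ℕ}
    (σ : K.SimplexOf (n + 1)) (i : Fin (n + 2)) : K.SimplexOf n := by
  classical
  refine ⟨σ.1.erase (σ.1.orderEmbOfFin σ.2.2 i),
    K.down_closed σ.2.1 (Finset.erase_subset _ _) ?_, ?_⟩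
  · rw [← Finset.card_pos, Finset.card_erase_of_mem (Finset.orderEmbOfFin_mem _ _ _), σ.2.2]
    omega
  · simp [Finset.card_erase_of_mem (Finset.orderEmbOfFin_mem _ _ _), σ.2.2]

/-- The quotient `b / a` in a commutative ring, for `a ∣ b` (an arbitrary choice of
quotient; it is unique when the ring is an integral domain and `a ≠ 0`). -/
noncomputable def dquot {R : Type*} [CommRing R] (b a : R) : R :=
  open Classical in if h : a ∣ b then h.choose else 0

/-- The weighted boundary map `∂ₙ : Cₙ₊₁ → Cₙ` of a weighted simplicial complex `(K, w)`,
`∂ₙ σ = Σᵢ (w σ / w (dᵢ σ)) (-1)ⁱ dᵢ σ`, with coefficients pushed forward along a ring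
homomorphism `g : R →+* S` (take `g = RingHom.id R` for coefficients in `R` itself). -/
noncomputable def wbnd {V R S : Type*} [LinearOrder V] [CommRing R] [CommRing S]
    (g : R →+* S) (K : SComplex V) (w : Finset V → R) (n : ℕ) :
    (K.SimplexOf (n + 1) →₀ S) →ₗ[S] (K.SimplexOf n →₀ S) :=
  Finsupp.lsum S fun σ => LinearMap.toSpanSingleton S _
    (∑ i : Fin (n + 2),
      ((-1 : S) ^ (i : ℕ) * g (dquot (w σ.1) (w (K.face σ i).1))) •
        Finsupp.single (K.face σ i) (1 : S))

/-- The weighted cycles in degree `n` (in degree `0` every chain is a cycle). -/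
noncomputable def wZ {V R S : Type*} [LinearOrder V] [CommRing R] [CommRing S]
    (g : R →+* S) (K : SComplex V) (w : Finset V → R) :
    (n : ℕ) → Submodule S (K.SimplexOf n →₀ S)
  | 0 => ⊤
  | n + 1 => LinearMap.ker (wbnd g K w n)

/-- The weighted homology `Hₙ(K, w) = ker ∂ₙ / im ∂ₙ₊₁` with coefficients in `S`. -/
noncomputable abbrev wH {V R S : Type*} [LinearOrder V] [CommRing R] [CommRing S]
    (g : R →+* S) (K : SComplex V) (w : Finset V → R) (n : ℕ) :=
  letI : AddCommGroup ↥(wZ g K w n) := inferInstance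
  wZ g K w n ⧸ Submodule.comap (wZ g K w n).subtype (LinearMap.range (wbnd g K w n))

/-- Coefficient reduction on chains along an additive map of coefficient rings. -/
noncomputable def chMap {V : Type*} {S T : Type*} [CommRing S] [CommRing T]
    (K : SComplex V) (g : S →+ T) (n : ℕ) :
    (K.SimplexOf n →₀ S) →+ (K.SimplexOf n →₀ T) :=
  Finsupp.mapRange.addMonoidHom g

section Dquot

variable {R : Type*} [CommRing R]

theorem mul_dquot {a b : R} (h : a ∣ b) : a * dquot b a = b := by
  rw [dquot, dif_pos h]
  exact h.choose_spec.symm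

theorem dquot_mul_dquot [IsDomain R] {a b c : R} (ha : a ≠ 0) (hab : a ∣ b) (hbc : b ∣ c) :
    dquot c b * dquot b a = dquot c a :=
  mul_left_cancel₀ ha <| by
    rw [mul_dquot (hab.trans hbc), mul_left_comm, mul_dquot hab, mul_comm, mul_dquot hbc]

end Dquot

namespace Fin

/-- The pairs `(i, j)` and `faceSwap (i, j)` delete the same two vertices of a simplex, in the
opposite order. -/
def faceSwap {n : ℕ} (x : Fin (n + 2) × Fin (n + 1)) : Fin (n + 2) × Fin (n + 1) :=
  (x.1.succAbove x.2, x.2.predAbove x.1)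

theorem faceSwap_faceSwap {n : ℕ} (x : Fin (n + 2) × Fin (n + 1)) : faceSwap (faceSwap x) = x :=
  Prod.ext (succAbove_succAbove_predAbove x.1 x.2) (predAbove_predAbove_succAbove x.1 x.2)

theorem faceSwap_ne {n : ℕ} (x : Fin (n + 2) × Fin (n + 1)) : faceSwap x ≠ x :=
  fun h => succAbove_ne x.1 x.2 (congrArg Prod.fst h)

theorem neg_one_pow_faceSwap {S : Type*} [Ring S] {n : ℕ} (x : Fin (n + 2) × Fin (n + 1)) :
    (-1 : S) ^ ((faceSwap x).1 + (faceSwap x).2 : ℕ) = -(-1) ^ (x.1 + x.2 : ℕ) := by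
  have : ((faceSwap x).1 + (faceSwap x).2 : ℕ) + 1 = x.1 + x.2 ∨
      ((faceSwap x).1 + (faceSwap x).2 : ℕ) = x.1 + x.2 + 1 := by
    simp only [faceSwap, succAbove, predAbove, lt_def, val_castSucc, apply_dite Fin.val,
      val_pred, coe_castPred, dite_eq_ite, apply_ite Fin.val, val_succ]
    split_ifs <;> omega
  rcases this with h | h
  · rw [← h, pow_succ, mul_neg_one, neg_neg]
  · rw [h, pow_succ, mul_neg_one]

end Fin

theorem Finset.orderEmbOfFin_erase {V : Type*} [LinearOrder V] {s : Finset V} {m : ℕ}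
    (h : s.card = m + 2) (i : Fin (m + 2)) (h' : (s.erase (s.orderEmbOfFin h i)).card = m + 1)
    (j : Fin (m + 1)) :
    (s.erase (s.orderEmbOfFin h i)).orderEmbOfFin h' j = s.orderEmbOfFin h (i.succAbove j) := by
  refine (congrFun (Finset.orderEmbOfFin_unique h' (fun x => Finset.mem_erase.2 ⟨?_,
    Finset.orderEmbOfFin_mem _ _ _⟩) ((s.orderEmbOfFin h).strictMono.comp
      (Fin.strictMono_succAbove i))) j).symm
  exact fun hx => Fin.succAbove_ne i x ((s.orderEmbOfFin h).injective hx)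

namespace SComplex

variable {V : Type*} [LinearOrder V]

theorem face_face_faceSwap (K : SComplex V) {n : ℕ} (σ : K.SimplexOf (n + 2))
    (x : Fin (n + 3) × Fin (n + 2)) :
    K.face (K.face σ (Fin.faceSwap x).1) (Fin.faceSwap x).2 = K.face (K.face σ x.1) x.2 := by
  have h (y : Fin (n + 3) × Fin (n + 2)) : (K.face (K.face σ y.1) y.2).1 =
      (σ.1.erase (σ.1.orderEmbOfFin σ.2.2 y.1)).erase
        (σ.1.orderEmbOfFin σ.2.2 (y.1.succAbove y.2)) :=
    congrArg ((σ.1.erase (σ.1.orderEmbOfFin σ.2.2 y.1)).erase ·)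
      (Finset.orderEmbOfFin_erase σ.2.2 y.1 (K.face σ y.1).2.2 y.2)
  apply Subtype.ext
  rw [h, h]
  dsimp only [Fin.faceSwap]
  rw [Fin.succAbove_succAbove_predAbove]
  exact Finset.erase_right_comm

theorem face_subset (K : SComplex V) {n : ℕ} (σ : K.SimplexOf (n + 1)) (i : Fin (n + 2)) :
    (K.face σ i).1 ⊆ σ.1 :=
  Finset.erase_subset _ _

end SComplex

section Boundary

variable {V R S : Type*} [LinearOrder V] [CommRing R] [CommRing S]
  (g : R →+* S) (K : SComplex V) (w : Finset V → R)

theorem wbnd_single (n : ℕ) (σ : K.SimplexOf (n + 1)) (b : S) :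
    wbnd g K w n (Finsupp.single σ b) =
      ∑ i : Fin (n + 2), Finsupp.single (K.face σ i)
        (b * ((-1 : S) ^ (i : ℕ) * g (dquot (w σ.1) (w (K.face σ i).1)))) := by
  rw [wbnd, Finsupp.lsum_single, LinearMap.toSpanSingleton_apply, Finset.smul_sum]
  refine Finset.sum_congr rfl fun i _ => ?_
  rw [smul_smul, Finsupp.smul_single, smul_eq_mul, mul_one]

theorem chMap_wbnd (n : ℕ) (c : K.SimplexOf (n + 1) →₀ R) :
    chMap K g.toAddMonoidHom n (wbnd (RingHom.id R) K w n c) =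
      wbnd g K w n (chMap K g.toAddMonoidHom (n + 1) c) := by
  induction c using Finsupp.induction_linear with
  | zero => simp only [map_zero]
  | add c c' hc hc' => simp only [map_add, hc, hc']
  | single σ b =>
    simp only [chMap, Finsupp.mapRange.addMonoidHom_apply, Finsupp.mapRange_single,
      wbnd_single, Finsupp.mapRange_finsetSum]
    refine Finset.sum_congr rfl fun i _ => ?_
    simp only [RingHom.toAddMonoidHom_eq_coe, AddMonoidHom.coe_coe, map_mul, map_pow, map_neg,
      map_one, RingHom.id_apply]

variable [IsDomain R] {K w}
  (hw0 : ∀ s ∈ K.faces, w s ≠ 0)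
  (hdvd : ∀ {s t : Finset V}, s ∈ K.faces → t ∈ K.faces → t ⊆ s → w t ∣ w s)
include hw0 hdvd

theorem dquot_mul_dquot_face {n : ℕ} (σ : K.SimplexOf (n + 2)) (i : Fin (n + 3))
    (j : Fin (n + 2)) :
    dquot (w σ.1) (w (K.face σ i).1) * dquot (w (K.face σ i).1) (w (K.face (K.face σ i) j).1) =
      dquot (w σ.1) (w (K.face (K.face σ i) j).1) :=
  dquot_mul_dquot (hw0 _ (K.face (K.face σ i) j).2.1)
    (hdvd (K.face σ i).2.1 (K.face (K.face σ i) j).2.1 (K.face_subset (K.face σ i) j))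
    (hdvd σ.2.1 (K.face σ i).2.1 (K.face_subset σ i))

/-- The face pairs `x` and `Fin.faceSwap x` reach the same codimension-two face `τ` with
opposite signs, while the weight quotients compose to `w σ / w τ` along either route. -/
theorem wbnd_wbnd (n : ℕ) (c : K.SimplexOf (n + 2) →₀ S) :
    wbnd g K w n (wbnd g K w (n + 1) c) = 0 := by
  induction c using Finsupp.induction_linear with
  | zero => simp only [map_zero]
  | add c c' hc hc' => rw [map_add, map_add, hc, hc', add_zero]
  | single σ b =>
    let τ (x : Fin (n + 3) × Fin (n + 2)) := K.face (K.face σ x.1) x.2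
    have hterm (x : Fin (n + 3) × Fin (n + 2)) :
        Finsupp.single (τ x)
          (b * ((-1 : S) ^ (x.1 : ℕ) * g (dquot (w σ.1) (w (K.face σ x.1).1))) *
            ((-1 : S) ^ (x.2 : ℕ) * g (dquot (w (K.face σ x.1).1) (w (τ x).1)))) =
          (-1 : S) ^ (x.1 + x.2 : ℕ) •
            Finsupp.single (τ x) (b * g (dquot (w σ.1) (w (τ x).1))) := by
      dsimp only [τ]
      rw [← dquot_mul_dquot_face hw0 hdvd, map_mul, Finsupp.smul_single, smul_eq_mul, pow_add]
      ring_nf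
    simp only [wbnd_single, map_sum]
    rw [← Fintype.sum_prod_type']
    refine Finset.sum_ninvolution Fin.faceSwap (fun x => ?_) (fun x _ => Fin.faceSwap_ne x)
      (fun _ => Finset.mem_univ _) Fin.faceSwap_faceSwap
    rw [hterm, hterm, Fin.neg_one_pow_faceSwap, show τ (Fin.faceSwap x) = τ x from
      K.face_face_faceSwap σ x, neg_smul, add_neg_cancel]

end Boundary

section Cycles

variable {V R S : Type*} [LinearOrder V] [CommRing R] [CommRing S]
  {K : SComplex V} {w : Finset V → R}

theorem mem_wZ_succ {g : R →+* S} {n : ℕ} {z : K.SimplexOf (n + 1) →₀ S} :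
    z ∈ wZ g K w (n + 1) ↔ wbnd g K w n z = 0 :=
  LinearMap.mem_ker

theorem chMap_mem_wZ (g : R →+* S) {n : ℕ} {z : K.SimplexOf n →₀ R}
    (hz : z ∈ wZ (RingHom.id R) K w n) :
    chMap K g.toAddMonoidHom n z ∈ wZ g K w n := by
  cases n with
  | zero => exact Submodule.mem_top
  | succ n => rw [mem_wZ_succ, ← chMap_wbnd, mem_wZ_succ.1 hz, map_zero]

theorem mem_wZ_of_smul_mem [IsDomain R] {p : R} (hp : p ≠ 0) {n : ℕ}
    {a : K.SimplexOf n →₀ R} (h : p • a ∈ wZ (RingHom.id R) K w n) :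
    a ∈ wZ (RingHom.id R) K w n := by
  cases n with
  | zero => exact Submodule.mem_top
  | succ n =>
    rw [mem_wZ_succ, map_smul] at h
    exact mem_wZ_succ.2 ((smul_eq_zero.1 h).resolve_left hp)

theorem wbnd_mem_wZ [IsDomain R] (hw0 : ∀ s ∈ K.faces, w s ≠ 0)
    (hdvd : ∀ {s t : Finset V}, s ∈ K.faces → t ∈ K.faces → t ⊆ s → w t ∣ w s)
    (g : R →+* S) (n : ℕ) (c : K.SimplexOf (n + 1) →₀ S) :
    wbnd g K w n c ∈ wZ g K w n := by
  cases n with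
  | zero => exact Submodule.mem_top
  | succ n => exact mem_wZ_succ.2 (wbnd_wbnd g hw0 hdvd n c)

end Cycles

section Reduction

variable {V R S : Type*} [CommRing R] [CommRing S] {K : SComplex V}

theorem chMap_surjective {g : R →+ S} (hg : Function.Surjective g) (n : ℕ) :
    Function.Surjective (chMap K g n) :=
  Finsupp.mapRange_surjective g (map_zero g) hg

theorem chMap_eq_zero_iff {g : R →+* S} {p : R} (hker : RingHom.ker g = Ideal.span {p}) {n : ℕ}
    {c : K.SimplexOf n →₀ R} : chMap K g.toAddMonoidHom n c = 0 ↔ ∃ e, p • e = c := by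
  rw [Finsupp.ext_iff]
  simp only [chMap, Finsupp.mapRange.addMonoidHom_apply, Finsupp.mapRange_apply,
    RingHom.toAddMonoidHom_eq_coe, AddMonoidHom.coe_coe, Finsupp.coe_zero, Pi.zero_apply,
    ← RingHom.mem_ker, hker, Ideal.mem_span_singleton]
  constructor
  · intro h
    refine ⟨c.sum fun τ x => Finsupp.single τ (dquot x p), ?_⟩
    rw [Finsupp.smul_sum]
    conv_rhs => rw [← Finsupp.sum_single c]
    exact Finsupp.sum_congr fun τ _ => by rw [Finsupp.smul_single, smul_eq_mul, mul_dquot (h τ)]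
  · rintro ⟨e, rfl⟩ τ
    exact dvd_mul_right p (e τ)

end Reduction

section Bockstein

variable {V R S : Type*} [LinearOrder V] [CommRing R] [CommRing S]
  (g : R →+* S) (K : SComplex V) (w : Finset V → R)

noncomputable def reduceCycle (n : ℕ) : wZ (RingHom.id R) K w n →+ wH g K w n :=
  AddMonoidHom.mk'
    (fun z => Submodule.Quotient.mk ⟨chMap K g.toAddMonoidHom n z.1, chMap_mem_wZ g z.2⟩)
    fun a b => by
      rw [← Submodule.Quotient.mk_add]
      exact congrArg _ (Subtype.ext (map_add _ _ _))

noncomputable def reduceHom (n : ℕ) : wH (RingHom.id R) K w n →+ wH g K w n :=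
  QuotientAddGroup.lift _ (reduceCycle g K w n) fun z hz => by
    obtain ⟨c, hc⟩ := hz
    refine (Submodule.Quotient.mk_eq_zero _).2 ⟨chMap K g.toAddMonoidHom (n + 1) c, ?_⟩
    rw [← chMap_wbnd, hc]
    rfl

variable {g K w}

theorem reduceHom_mk {n : ℕ} (z : wZ (RingHom.id R) K w n) :
    reduceHom g K w n (Submodule.Quotient.mk z) =
      Submodule.Quotient.mk ⟨chMap K g.toAddMonoidHom n z.1, chMap_mem_wZ g z.2⟩ :=
  rfl

variable [IsDomain R] (hg : Function.Surjective g) {p : R}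
  (hker : RingHom.ker g = Ideal.span {p}) (hp : p ≠ 0) (hw0 : ∀ s ∈ K.faces, w s ≠ 0)
  (hdvd : ∀ {s t : Finset V}, s ∈ K.faces → t ∈ K.faces → t ⊆ s → w t ∣ w s)
include hg hker hp hw0 hdvd

theorem exists_lift_wbnd_eq_smul {n : ℕ} (z : wZ g K w (n + 1)) :
    ∃ ca : (K.SimplexOf (n + 1) →₀ R) × wZ (RingHom.id R) K w n,
      chMap K g.toAddMonoidHom (n + 1) ca.1 = z.1 ∧
        wbnd (RingHom.id R) K w n ca.1 = p • ca.2.1 := by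
  obtain ⟨c, hc⟩ := chMap_surjective (g := g.toAddMonoidHom) hg (n + 1) z.1
  have hred : chMap K g.toAddMonoidHom n (wbnd (RingHom.id R) K w n c) = 0 := by
    rw [chMap_wbnd, hc, mem_wZ_succ.1 z.2]
  obtain ⟨a, ha⟩ := (chMap_eq_zero_iff hker).1 hred
  have hacyc : a ∈ wZ (RingHom.id R) K w n :=
    mem_wZ_of_smul_mem hp (ha ▸ wbnd_mem_wZ hw0 hdvd _ n c)
  exact ⟨(c, ⟨a, hacyc⟩), hc, ha.symm⟩

theorem mk_eq_zero_of_wbnd_eq_smul {n : ℕ} {c : K.SimplexOf (n + 1) →₀ R}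
    {a : wZ (RingHom.id R) K w n}
    (hc : chMap K g.toAddMonoidHom (n + 1) c ∈ LinearMap.range (wbnd g K w (n + 1)))
    (h : wbnd (RingHom.id R) K w n c = p • a.1) :
    (Submodule.Quotient.mk a : wH (RingHom.id R) K w n) = 0 := by
  obtain ⟨u, hu⟩ := hc
  obtain ⟨v, rfl⟩ := chMap_surjective (g := g.toAddMonoidHom) hg (n + 2) u
  obtain ⟨e, he⟩ := (chMap_eq_zero_iff hker).1 <|
    show chMap K g.toAddMonoidHom (n + 1) (c - wbnd (RingHom.id R) K w (n + 1) v) = 0 by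
      rw [map_sub, chMap_wbnd, hu, sub_self]
  have hea : wbnd (RingHom.id R) K w n e = a.1 := by
    refine smul_right_injective _ hp ?_
    simp only [← map_smul, he, map_sub, h, wbnd_wbnd _ hw0 hdvd, sub_zero]
  exact (Submodule.Quotient.mk_eq_zero _).2 ⟨e, hea⟩

-- `z ↦ [∂c / p]` for a chosen lift `c` of `z`.
noncomputable def connectingCycle {n : ℕ} (z : wZ g K w (n + 1)) : wH (RingHom.id R) K w n :=
  Submodule.Quotient.mk (exists_lift_wbnd_eq_smul hg hker hp hw0 hdvd z).choose.2

theorem connectingCycle_eq {n : ℕ} {z : wZ g K w (n + 1)} {c : K.SimplexOf (n + 1) →₀ R}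
    {a : wZ (RingHom.id R) K w n} (hc : chMap K g.toAddMonoidHom (n + 1) c = z.1)
    (h : wbnd (RingHom.id R) K w n c = p • a.1) :
    connectingCycle hg hker hp hw0 hdvd z = Submodule.Quotient.mk a := by
  obtain ⟨hc₀, ha₀⟩ := (exists_lift_wbnd_eq_smul hg hker hp hw0 hdvd z).choose_spec
  rw [connectingCycle, ← sub_eq_zero, ← Submodule.Quotient.mk_sub]
  refine mk_eq_zero_of_wbnd_eq_smul hg hker hp hw0 hdvd
    (c := (exists_lift_wbnd_eq_smul hg hker hp hw0 hdvd z).choose.1 - c) ?_ ?_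
  · rw [map_sub, hc₀, hc, sub_self]
    exact zero_mem _
  · rw [map_sub, ha₀, h, Submodule.coe_sub, smul_sub]

theorem connectingCycle_add {n : ℕ} (z₁ z₂ : wZ g K w (n + 1)) :
    connectingCycle hg hker hp hw0 hdvd (z₁ + z₂) =
      connectingCycle hg hker hp hw0 hdvd z₁ + connectingCycle hg hker hp hw0 hdvd z₂ := by
  obtain ⟨⟨c₁, a₁⟩, hc₁, ha₁⟩ := exists_lift_wbnd_eq_smul hg hker hp hw0 hdvd z₁
  obtain ⟨⟨c₂, a₂⟩, hc₂, ha₂⟩ := exists_lift_wbnd_eq_smul hg hker hp hw0 hdvd z₂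
  rw [connectingCycle_eq hg hker hp hw0 hdvd hc₁ ha₁,
    connectingCycle_eq hg hker hp hw0 hdvd hc₂ ha₂, ← Submodule.Quotient.mk_add,
    connectingCycle_eq hg hker hp hw0 hdvd (c := c₁ + c₂)]
  · rw [map_add, hc₁, hc₂, Submodule.coe_add]
  · rw [map_add, ha₁, ha₂, Submodule.coe_add, smul_add]

noncomputable def connectingHom (n : ℕ) : wH g K w (n + 1) →+ wH (RingHom.id R) K w n :=
  QuotientAddGroup.lift _
    (AddMonoidHom.mk' (connectingCycle hg hker hp hw0 hdvd)
      (connectingCycle_add hg hker hp hw0 hdvd))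
    fun z hz => by
      obtain ⟨⟨c, a⟩, hc, ha⟩ := exists_lift_wbnd_eq_smul hg hker hp hw0 hdvd z
      exact (connectingCycle_eq hg hker hp hw0 hdvd hc ha).trans
        (mk_eq_zero_of_wbnd_eq_smul hg hker hp hw0 hdvd (hc ▸ hz) ha)

theorem connectingHom_mk {n : ℕ} (z : wZ g K w (n + 1)) :
    connectingHom hg hker hp hw0 hdvd n (Submodule.Quotient.mk z) =
      connectingCycle hg hker hp hw0 hdvd z :=
  rfl

theorem exact_connectingHom_smul (n : ℕ) :
    Function.Exact (connectingHom hg hker hp hw0 hdvd n)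
      (fun x : wH (RingHom.id R) K w n => p • x) := by
  intro y
  constructor
  · intro hy
    obtain ⟨a, rfl⟩ := Submodule.Quotient.mk_surjective _ y
    beta_reduce at hy
    rw [← Submodule.Quotient.mk_smul, Submodule.Quotient.mk_eq_zero] at hy
    obtain ⟨c, hc⟩ := hy
    have hcyc : chMap K g.toAddMonoidHom (n + 1) c ∈ wZ g K w (n + 1) := by
      rw [mem_wZ_succ, ← chMap_wbnd, hc, Submodule.subtype_apply, Submodule.coe_smul,
        (chMap_eq_zero_iff hker).2 ⟨_, rfl⟩]
    exact ⟨Submodule.Quotient.mk ⟨_, hcyc⟩, connectingCycle_eq hg hker hp hw0 hdvd rfl hc⟩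
  · rintro ⟨x, rfl⟩
    obtain ⟨z, rfl⟩ := Submodule.Quotient.mk_surjective _ x
    obtain ⟨⟨c, a⟩, hc, ha⟩ := exists_lift_wbnd_eq_smul hg hker hp hw0 hdvd z
    beta_reduce
    rw [connectingHom_mk, connectingCycle_eq hg hker hp hw0 hdvd hc ha,
      ← Submodule.Quotient.mk_smul, Submodule.Quotient.mk_eq_zero]
    exact ⟨c, ha⟩

theorem exact_smul_reduceHom (n : ℕ) :
    Function.Exact (fun x : wH (RingHom.id R) K w n => p • x) (reduceHom g K w n) := by
  intro y
  constructor
  · intro hy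
    obtain ⟨z, rfl⟩ := Submodule.Quotient.mk_surjective _ y
    rw [reduceHom_mk, Submodule.Quotient.mk_eq_zero] at hy
    obtain ⟨u, hu⟩ := hy
    obtain ⟨v, rfl⟩ := chMap_surjective (g := g.toAddMonoidHom) hg (n + 1) u
    obtain ⟨d, hd⟩ := (chMap_eq_zero_iff hker).1 <|
      show chMap K g.toAddMonoidHom n (z.1 - wbnd (RingHom.id R) K w n v) = 0 by
        rw [map_sub, chMap_wbnd, hu]
        exact sub_self _
    have hdcyc : d ∈ wZ (RingHom.id R) K w n :=
      mem_wZ_of_smul_mem hp (hd ▸ sub_mem z.2 (wbnd_mem_wZ hw0 hdvd _ n v))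
    refine ⟨Submodule.Quotient.mk ⟨d, hdcyc⟩, ?_⟩
    beta_reduce
    rw [← Submodule.Quotient.mk_smul, Submodule.Quotient.eq]
    refine ⟨-v, ?_⟩
    simp only [map_neg, Submodule.subtype_apply, Submodule.coe_sub, Submodule.coe_smul, hd]
    abel
  · rintro ⟨x, rfl⟩
    obtain ⟨a, rfl⟩ := Submodule.Quotient.mk_surjective _ x
    beta_reduce
    rw [← Submodule.Quotient.mk_smul, reduceHom_mk, Submodule.Quotient.mk_eq_zero]
    exact ⟨0, (map_zero (wbnd g K w n)).trans ((chMap_eq_zero_iff hker).2 ⟨a.1, rfl⟩).symm⟩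

theorem exact_reduceHom_connectingHom (n : ℕ) :
    Function.Exact (reduceHom g K w (n + 1)) (connectingHom hg hker hp hw0 hdvd n) := by
  intro y
  constructor
  · intro hy
    obtain ⟨z, rfl⟩ := Submodule.Quotient.mk_surjective _ y
    obtain ⟨⟨c, a⟩, hc, ha⟩ := exists_lift_wbnd_eq_smul hg hker hp hw0 hdvd z
    rw [connectingHom_mk, connectingCycle_eq hg hker hp hw0 hdvd hc ha,
      Submodule.Quotient.mk_eq_zero] at hy
    obtain ⟨e, he⟩ := hy
    have hcyc : c - p • e ∈ wZ (RingHom.id R) K w (n + 1) := by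
      rw [mem_wZ_succ, map_sub, map_smul, he, ha, Submodule.subtype_apply, sub_self]
    refine ⟨Submodule.Quotient.mk ⟨_, hcyc⟩, congrArg _ (Subtype.ext ?_)⟩
    show chMap K g.toAddMonoidHom (n + 1) (c - p • e) = z.1
    rw [map_sub, hc, (chMap_eq_zero_iff hker).2 ⟨e, rfl⟩, sub_zero]
  · rintro ⟨x, rfl⟩
    obtain ⟨z, rfl⟩ := Submodule.Quotient.mk_surjective _ x
    rw [reduceHom_mk, connectingHom_mk, connectingCycle_eq hg hker hp hw0 hdvd (a := 0) rfl
      (by rw [mem_wZ_succ.1 z.2, ZeroMemClass.coe_zero, smul_zero]), Submodule.Quotient.mk_zero]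

end Bockstein

/-- Let `R` be an integral domain, `p ∈ R` a prime element, and
`(K, w)` a weighted simplicial complex with weights in `R`.  The short exact sequence
`0 → R →(×p) R → R/pR → 0` induces a long exact sequence of weighted homology
`⋯ → Hₙ(K,w;R) →(×p) Hₙ(K,w;R) →ρ Hₙ(K,w;R/pR) →∂ H_{n-1}(K,w;R) → ⋯`, and the
generalized Bockstein homomorphism `β = ρ_* ∘ ∂` satisfies `β ∘ β = 0`. -/
theorem generalized_bockstein_les_and_bockstein_squared_zero
    {V R : Type*} [LinearOrder V] [CommRing R] [IsDomain R]
    (p : R) (hp : Prime p)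
    (K : SComplex V) (w : Finset V → R)
    (hw0 : ∀ s ∈ K.faces, w s ≠ 0)
    (hdvd : ∀ {s t : Finset V}, s ∈ K.faces → t ∈ K.faces → t ⊆ s → w t ∣ w s) :
    ∃ (μ : ∀ n, wH (RingHom.id R) K w n →+ wH (RingHom.id R) K w n)
      (ρ : ∀ n, wH (RingHom.id R) K w n →+
        wH (Ideal.Quotient.mk (Ideal.span ({p} : Set R))) K w n)
      (δ : ∀ n, wH (Ideal.Quotient.mk (Ideal.span ({p} : Set R))) K w (n + 1) →+
        wH (RingHom.id R) K w n),
      -- `μ` is induced by multiplication by `p` on chains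
      (∀ n (z : wZ (RingHom.id R) K w n),
        μ n (Submodule.Quotient.mk z) = Submodule.Quotient.mk (p • z))
      -- `ρ` is induced by reduction of coefficients mod `p`
      ∧ (∀ n (z : wZ (RingHom.id R) K w n),
        ∃ hz : chMap K (AddMonoidHom.mk' (Ideal.Quotient.mk (Ideal.span ({p} : Set R)))
              (map_add _)) n z.1 ∈
            wZ (Ideal.Quotient.mk (Ideal.span ({p} : Set R))) K w n,
          ρ n (Submodule.Quotient.mk z) =
            Submodule.Quotient.mk
              (⟨_, hz⟩ : wZ (Ideal.Quotient.mk (Ideal.span ({p} : Set R))) K w n))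
      -- `δ` is the connecting homomorphism: `δ [c ⊗ 1] = [a]` whenever `∂ c = p • a`
      ∧ (∀ n (c : K.SimplexOf (n + 1) →₀ R)
          (hc : chMap K (AddMonoidHom.mk' (Ideal.Quotient.mk (Ideal.span ({p} : Set R)))
              (map_add _)) (n + 1) c ∈
            wZ (Ideal.Quotient.mk (Ideal.span ({p} : Set R))) K w (n + 1))
          (a : wZ (RingHom.id R) K w n),
          wbnd (RingHom.id R) K w n c = p • a.1 →
          δ n (Submodule.Quotient.mk
              (⟨_, hc⟩ : wZ (Ideal.Quotient.mk (Ideal.span ({p} : Set R))) K w (n + 1)))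
            = Submodule.Quotient.mk a)
      -- exactness
      ∧ (∀ n, Function.Exact ⇑(δ n) ⇑(μ n))
      ∧ (∀ n, Function.Exact ⇑(μ n) ⇑(ρ n))
      ∧ (∀ n, Function.Exact ⇑(ρ (n + 1)) ⇑(δ n))
      -- the generalized Bockstein `β = ρ ∘ δ` satisfies `β ∘ β = 0`
      ∧ (∀ n, ((ρ n).comp (δ n)).comp (((ρ (n + 1)).comp (δ (n + 1)))) = 0) := by
  have hker := Ideal.mk_ker (I := Ideal.span ({p} : Set R))
  have hg := Ideal.Quotient.mk_surjective (I := Ideal.span ({p} : Set R))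
  have hexact := exact_reduceHom_connectingHom hg hker hp.ne_zero hw0 hdvd
  refine ⟨fun _ => DistribSMul.toAddMonoidHom _ p, reduceHom _ K w,
    connectingHom hg hker hp.ne_zero hw0 hdvd, fun _ z => (Submodule.Quotient.mk_smul _ p z).symm,
    fun _ z => ⟨chMap_mem_wZ _ z.2, rfl⟩,
    fun _ _ _ _ h => connectingCycle_eq hg hker hp.ne_zero hw0 hdvd rfl h,
    exact_connectingHom_smul hg hker hp.ne_zero hw0 hdvd,
    exact_smul_reduceHom hg hker hp.ne_zero hw0 hdvd, hexact, fun n => ?_⟩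
  ext x
  exact congrArg (reduceHom _ K w n) ((hexact n).apply_apply_eq_zero _)
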